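/- Let n ≥ 3 and k_φ > 0, f > 0. Let C be the n×n circulant matrix over ℂ with entries C_{i,i+1 mod n} = C_{i,i−1 mod n} = 1/2 and all other entries 0, and D the n×n circulant matrix over ℂ with D_{i,i+1 mod n} = 1/2, D_{i,i−1 mod n} = −1/2, other entries 0, and set M := k_φ(C − I) + f·D. Then every eigenvalue μ ∈ ℂ of M satisfies Re(μ) ≤ 0; moreover Re(μ) = 0 implies μ = 0, and the eigenspace of M for eigenvalue 0 is exactly the span of the all-ones vector 𝟙. -/
import Mathlib

open Matrix

/-- The `n × n` complex circulant matrix with first row `(0, 1/2, 0, …, 0, 1/2)`. -/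
noncomputable def ringCc (n : ℕ) : Matrix (Fin n) (Fin n) ℂ :=
  Matrix.of fun i j =>
    if ((i : ℕ) + 1) % n = (j : ℕ) ∨ ((j : ℕ) + 1) % n = (i : ℕ) then (1 : ℂ) / 2 else 0

/-- The `n × n` complex circulant matrix with first row `(0, -1/2, 0, …, 0, 1/2)`. -/
noncomputable def ringDc (n : ℕ) : Matrix (Fin n) (Fin n) ℂ :=
  Matrix.of fun i j =>
    if ((i : ℕ) + 1) % n = (j : ℕ) then (1 : ℂ) / 2
    else if ((j : ℕ) + 1) % n = (i : ℕ) then -(1 : ℂ) / 2 else 0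

namespace StmtAux

open Complex Finset

variable {n : ℕ} [NeZero n]

lemma val_one (hn : 3 ≤ n) : ((1 : Fin n) : ℕ) = 1 := by
  rw [Fin.val_one', Nat.mod_eq_of_lt (by omega)]

lemma val_add_one (hn : 3 ≤ n) (i : Fin n) : ((i + 1 : Fin n) : ℕ) = ((i : ℕ) + 1) % n := by
  rw [Fin.add_def, val_one hn]

lemma cond1 (hn : 3 ≤ n) (i j : Fin n) : ((i : ℕ) + 1) % n = (j : ℕ) ↔ j = i + 1 := by
  rw [← val_add_one hn, Fin.val_inj]
  exact eq_comm

lemma cond2 (hn : 3 ≤ n) (i j : Fin n) : ((j : ℕ) + 1) % n = (i : ℕ) ↔ j = i - 1 := by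
  rw [← val_add_one hn, Fin.val_inj]
  exact eq_sub_iff_add_eq.symm

lemma ne_pm (hn : 3 ≤ n) (i : Fin n) : i + 1 ≠ i - 1 := by
  intro h
  have h2 : i + 1 + 1 = i := by rw [h, sub_add_cancel]
  have h3 := congrArg Fin.val h2
  rw [val_add_one hn, val_add_one hn] at h3
  have hx : (i : ℕ) < n := i.isLt
  by_cases hx1 : (i : ℕ) + 1 < n
  · rw [Nat.mod_eq_of_lt hx1] at h3
    by_cases hx2 : (i : ℕ) + 1 + 1 < n
    · rw [Nat.mod_eq_of_lt hx2] at h3; omega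
    · have he : (i : ℕ) + 1 + 1 = n := by omega
      rw [he, Nat.mod_self] at h3; omega
  · have he : (i : ℕ) + 1 = n := by omega
    rw [he, Nat.mod_self] at h3
    rw [Nat.mod_eq_of_lt (by omega)] at h3; omega

lemma ringCc_mulVec (hn : 3 ≤ n) (v : Fin n → ℂ) (i : Fin n) :
    (ringCc n *ᵥ v) i = v (i + 1) / 2 + v (i - 1) / 2 := by
  have h : ∀ j, ringCc n i j * v j =
      (if j = i + 1 then v j / 2 else 0) + (if j = i - 1 then v j / 2 else 0) := by
    intro j
    have c1 := cond1 hn i j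
    have c2 := cond2 hn i j
    simp only [ringCc, of_apply]
    by_cases h1 : j = i + 1 <;> by_cases h2 : j = i - 1
    · exact absurd (h1.symm.trans h2) (ne_pm hn i)
    · rw [if_pos (Or.inl (c1.mpr h1)), if_pos h1, if_neg h2, add_zero]; ring
    · rw [if_pos (Or.inr (c2.mpr h2)), if_neg h1, if_pos h2, zero_add]; ring
    · rw [if_neg (fun hc => hc.elim (fun hc1 => h1 (c1.mp hc1)) (fun hc2 => h2 (c2.mp hc2))),
        if_neg h1, if_neg h2, add_zero, zero_mul]
  simp only [mulVec, dotProduct]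
  rw [Finset.sum_congr rfl fun j _ => h j, Finset.sum_add_distrib,
    Finset.sum_ite_eq' Finset.univ (i + 1) (fun j => v j / 2),
    Finset.sum_ite_eq' Finset.univ (i - 1) (fun j => v j / 2)]
  simp

lemma ringDc_mulVec (hn : 3 ≤ n) (v : Fin n → ℂ) (i : Fin n) :
    (ringDc n *ᵥ v) i = v (i + 1) / 2 - v (i - 1) / 2 := by
  have h : ∀ j, ringDc n i j * v j =
      (if j = i + 1 then v j / 2 else 0) + (if j = i - 1 then -(v j) / 2 else 0) := by
    intro j
    have c1 := cond1 hn i j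
    have c2 := cond2 hn i j
    simp only [ringDc, of_apply]
    by_cases h1 : j = i + 1 <;> by_cases h2 : j = i - 1
    · exact absurd (h1.symm.trans h2) (ne_pm hn i)
    · rw [if_pos (c1.mpr h1), if_pos h1, if_neg h2, add_zero]; ring
    · rw [if_neg (fun hc => h1 (c1.mp hc)), if_pos (c2.mpr h2), if_neg h1, if_pos h2,
        zero_add]; ring
    · rw [if_neg (fun hc => h1 (c1.mp hc)), if_neg (fun hc => h2 (c2.mp hc)), if_neg h1,
        if_neg h2, add_zero, zero_mul]
  simp only [mulVec, dotProduct]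
  rw [Finset.sum_congr rfl fun j _ => h j, Finset.sum_add_distrib,
    Finset.sum_ite_eq' Finset.univ (i + 1) (fun j => v j / 2),
    Finset.sum_ite_eq' Finset.univ (i - 1) (fun j => -(v j) / 2)]
  simp
  ring

lemma M_mulVec (hn : 3 ≤ n) (kφ f : ℝ) (v : Fin n → ℂ) (i : Fin n) :
    (((kφ : ℂ) • (ringCc n - 1) + (f : ℂ) • ringDc n) *ᵥ v) i =
      (kφ : ℂ) * ((v (i + 1) + v (i - 1)) / 2 - v i) +
        (f : ℂ) * ((v (i + 1) - v (i - 1)) / 2) := by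
  simp only [add_mulVec, smul_mulVec, sub_mulVec, one_mulVec, Pi.add_apply,
    Pi.smul_apply, Pi.sub_apply, smul_eq_mul, ringCc_mulVec hn, ringDc_mulVec hn]
  ring

lemma sum_shift {M : Type*} [AddCommMonoid M] (g : Fin n → M) :
    ∑ i, g (i + 1) = ∑ i, g i :=
  Fintype.sum_equiv (Equiv.addRight 1) _ _ (fun _ => rfl)

lemma conj_mul_self_sum (v : Fin n → ℂ) :
    ∑ i, (starRingEnd ℂ) (v i) * v i = ((∑ i, normSq (v i) : ℝ) : ℂ) := by
  push_cast
  exact Finset.sum_congr rfl fun i _ => normSq_eq_conj_mul_self.symm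

lemma key (hn : 3 ≤ n) (kφ f : ℝ) (v : Fin n → ℂ) :
    2 * (∑ i, (starRingEnd ℂ) (v i) *
        ((((kφ : ℂ) • (ringCc n - 1) + (f : ℂ) • ringDc n)) *ᵥ v) i).re =
      -kφ * ∑ i, normSq (v (i + 1) - v i) := by
  set E : ℂ := ∑ i, (starRingEnd ℂ) (v i) * v (i + 1) with hE
  set N : ℝ := ∑ i, normSq (v i) with hN
  have hshift : ∑ i, (starRingEnd ℂ) (v (i + 1)) * v i =
      ∑ i, (starRingEnd ℂ) (v i) * v (i - 1) :=
    Fintype.sum_equiv (Equiv.addRight 1) _ _ (fun i => by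
      show (starRingEnd ℂ) (v (i + 1)) * v i = (starRingEnd ℂ) (v (i + 1)) * v (i + 1 - 1)
      rw [add_sub_cancel_right])
  have hE2 : ∑ i, (starRingEnd ℂ) (v i) * v (i - 1) = (starRingEnd ℂ) E := by
    rw [← hshift, hE, map_sum]
    exact Finset.sum_congr rfl fun i _ => by simp [mul_comm]
  have hNc : ∑ i, (starRingEnd ℂ) (v i) * v i = (N : ℂ) := conj_mul_self_sum v
  have hT : ∑ i, (starRingEnd ℂ) (v i) *
        ((((kφ : ℂ) • (ringCc n - 1) + (f : ℂ) • ringDc n)) *ᵥ v) i =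
      (kφ : ℂ) * ((E + (starRingEnd ℂ) E) / 2 - (N : ℂ)) +
        (f : ℂ) * ((E - (starRingEnd ℂ) E) / 2) := by
    rw [← hNc, ← hE2, hE]
    simp only [← Finset.sum_add_distrib, ← Finset.sum_sub_distrib, Finset.mul_sum,
      Finset.sum_div]
    refine Finset.sum_congr rfl fun i _ => ?_
    rw [M_mulVec hn]
    ring
  have h2T : (2 : ℂ) * ∑ i, (starRingEnd ℂ) (v i) *
        ((((kφ : ℂ) • (ringCc n - 1) + (f : ℂ) • ringDc n)) *ᵥ v) i =
      (kφ : ℂ) * (E + (starRingEnd ℂ) E - 2 * (N : ℂ)) + (f : ℂ) * (E - (starRingEnd ℂ) E) := by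
    rw [hT]; ring
  have hre := congrArg Complex.re h2T
  simp only [Complex.mul_re, Complex.add_re, Complex.sub_re, Complex.conj_re, Complex.conj_im,
    Complex.add_im, Complex.sub_im, Complex.mul_im, Complex.ofReal_re, Complex.ofReal_im,
    Complex.re_ofNat, Complex.im_ofNat] at hre
  have hS : ∑ i, normSq (v (i + 1) - v i) = 2 * N - 2 * E.re := by
    have h1 : ∀ i ∈ Finset.univ, normSq (v (i + 1) - v i) =
        normSq (v (i + 1)) + normSq (v i) - 2 * ((starRingEnd ℂ) (v i) * v (i + 1)).re :=
      fun i _ => by rw [Complex.normSq_sub, mul_comm (v (i + 1)) ((starRingEnd ℂ) (v i))]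
    rw [Finset.sum_congr rfl h1, Finset.sum_sub_distrib, Finset.sum_add_distrib,
      sum_shift (fun i => normSq (v i)), ← hN, ← Finset.mul_sum, ← Complex.re_sum, ← hE]
    ring
  rw [hS]
  linarith [hre]

end StmtAux

/-- Spectral properties of `M = k_φ (C - I) + f D`: every eigenvalue has nonpositive real
part, the only eigenvalue with zero real part is `0`, and the eigenspace for `0` is the
span of the all-ones vector. -/
theorem stmt_6 (n : ℕ) (hn : 3 ≤ n) (kφ f : ℝ) (hkφ : 0 < kφ) (hf : 0 < f) :
    (∀ μ : ℂ,
      (∃ v : Fin n → ℂ, v ≠ 0 ∧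
        ((kφ : ℂ) • (ringCc n - 1) + (f : ℂ) • ringDc n) *ᵥ v = μ • v) →
      μ.re ≤ 0 ∧ (μ.re = 0 → μ = 0)) ∧
    (∀ v : Fin n → ℂ,
      ((kφ : ℂ) • (ringCc n - 1) + (f : ℂ) • ringDc n) *ᵥ v = 0 ↔
        ∃ c : ℂ, v = fun _ => c) := by
  haveI : NeZero n := ⟨by omega⟩
  have hstepS : ∀ v : Fin n → ℂ, (∑ i, Complex.normSq (v (i + 1) - v i)) = 0 →
      ∀ i : Fin n, v (i + 1) = v i := by
    intro v hSz i
    have hz := (Finset.sum_eq_zero_iff_of_nonneg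
      (fun j (_ : j ∈ Finset.univ) => Complex.normSq_nonneg (v (j + 1) - v j))).mp hSz
      i (Finset.mem_univ i)
    exact sub_eq_zero.mp (Complex.normSq_eq_zero.mp hz)
  have hMconst : ∀ (v : Fin n → ℂ), (∀ i : Fin n, v (i + 1) = v i) →
      ∀ i, (((kφ : ℂ) • (ringCc n - 1) + (f : ℂ) • ringDc n) *ᵥ v) i = 0 := by
    intro v hstep i
    have hm : v (i - 1) = v i := by
      have h := hstep (i - 1); rw [sub_add_cancel] at h; exact h.symm
    rw [StmtAux.M_mulVec hn, hstep i, hm]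
    ring
  constructor
  · rintro μ ⟨v, hv, hev⟩
    have hkey := StmtAux.key hn kφ f v
    set N : ℝ := ∑ i, Complex.normSq (v i) with hN
    set S : ℝ := ∑ i, Complex.normSq (v (i + 1) - v i) with hS
    obtain ⟨i₀, hi₀⟩ := Function.ne_iff.mp hv
    have hN0 : 0 < N :=
      Finset.sum_pos' (fun j _ => Complex.normSq_nonneg _)
        ⟨i₀, Finset.mem_univ i₀, Complex.normSq_pos.mpr hi₀⟩
    have hS0 : 0 ≤ S := Finset.sum_nonneg fun j _ => Complex.normSq_nonneg _
    have hT : ∑ i, (starRingEnd ℂ) (v i) *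
          ((((kφ : ℂ) • (ringCc n - 1) + (f : ℂ) • ringDc n)) *ᵥ v) i = μ * (N : ℂ) := by
      rw [hev]
      simp only [Pi.smul_apply, smul_eq_mul]
      rw [show (∑ i, (starRingEnd ℂ) (v i) * (μ * v i)) =
          μ * ∑ i, (starRingEnd ℂ) (v i) * v i from by
            rw [Finset.mul_sum]; exact Finset.sum_congr rfl fun i _ => by ring,
        StmtAux.conj_mul_self_sum]
    rw [hT] at hkey
    have hre : (μ * (N : ℂ)).re = μ.re * N := by simp [Complex.mul_re]
    rw [hre] at hkey
    have hμle : μ.re ≤ 0 := by nlinarith [mul_nonneg hkφ.le hS0]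
    refine ⟨hμle, fun hμre => ?_⟩
    have hSz : S = 0 := by
      rw [hμre] at hkey; nlinarith
    have hMv0 := hMconst v (hstepS v hSz)
    have hμv : μ * v i₀ = 0 := by
      have h := congrFun hev i₀
      rw [hMv0 i₀] at h
      simpa [Pi.smul_apply, smul_eq_mul] using h.symm
    rcases mul_eq_zero.mp hμv with h | h
    · exact h
    · exact absurd h hi₀
  · intro v
    constructor
    · intro h0
      have hkey := StmtAux.key hn kφ f v
      have hT0 : ∑ i, (starRingEnd ℂ) (v i) *
          ((((kφ : ℂ) • (ringCc n - 1) + (f : ℂ) • ringDc n)) *ᵥ v) i = 0 := by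
        rw [h0]; simp
      rw [hT0] at hkey
      have hSz : (∑ i, Complex.normSq (v (i + 1) - v i)) = 0 := by
        have hS0 : 0 ≤ ∑ i, Complex.normSq (v (i + 1) - v i) :=
          Finset.sum_nonneg fun j _ => Complex.normSq_nonneg _
        simp only [Complex.zero_re, mul_zero] at hkey
        nlinarith
      have hstep := hstepS v hSz
      refine ⟨v 0, funext fun j => ?_⟩
      have hall : ∀ m : ℕ, ∀ hm : m < n, v ⟨m, hm⟩ = v 0 := by
        intro m
        induction m with
        | zero => intro hm; congr 1
        | succ m ih =>
          intro hm
          have hmn : m < n := by omega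
          have heq : (⟨m, hmn⟩ : Fin n) + 1 = ⟨m + 1, hm⟩ := by
            apply Fin.val_inj.mp
            rw [StmtAux.val_add_one hn]
            exact Nat.mod_eq_of_lt hm
          rw [← heq, hstep ⟨m, hmn⟩, ih hmn]
      have := hall j.1 j.2
      simpa using this
    · rintro ⟨c, rfl⟩
      funext i
      exact hMconst (fun _ => c) (fun _ => rfl) i
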